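/- arXiv:1807.08409 — 3 statements merged into one kernel-verified Lean document; each statement's English description precedes it below -/
import Mathlib

section
/- (Unbiasedness of the Poisson estimator.) Let X be a Poisson(1) random variable and let Y_1, Y_2, … be i.i.d. integrable real random variables with mean μ, independent of X. Then E[ ∏_{h=1}^{X} Y_h ] = e^{μ − 1}, where the empty product (X = 0) equals 1. Consequently, if each Y_h = (D_h − a)/λ with E[D_h] = d, then for the factor ξ = e^{(a+λ)/λ} ∏_{h=1}^{X} (D_h − a)/λ one has E[ξ] = e^{d/λ}. -/
/-!
Split `Ω` into the fibres `{X = n}`. On `{X = n}` the random product is the fixed product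
`∏_{h<n} Y h`, which is independent of `X`, so its integral there is
`P(X = n) μ^n = e^{-r} (r μ)^n / n!`, and these sum to `e^{r (μ - 1)}`. Summing over the fibres
is legitimate because the same computation for `|Y h|` gives the convergent series
`e^{-r} ∑ (r E|Y 0|)^n / n!`; this is where identical distribution enters.
-/

open MeasureTheory ProbabilityTheory Finset
open scoped NNReal Nat

namespace MeasureTheory

variable {Ω : Type*} [MeasurableSpace Ω] {P : Measure Ω}

lemma hasSum_setIntegral_preimage_singleton {E : Type*} [NormedAddCommGroup E]
    [NormedSpace ℝ E] {X : Ω → ℕ} (hX : Measurable X) {f : Ω → E}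
    (hfi : ∀ n, IntegrableOn f (X ⁻¹' {n}) P)
    (hsum : Summable fun n ↦ ∫ ω in X ⁻¹' {n}, ‖f ω‖ ∂P) :
    HasSum (fun n ↦ ∫ ω in X ⁻¹' {n}, f ω ∂P) (∫ ω, f ω ∂P) := by
  have hcover : ⋃ n, X ⁻¹' {n} = Set.univ := by
    rw [← Set.preimage_iUnion, Set.iUnion_of_singleton, Set.preimage_univ]
  have := hasSum_integral_iUnion (fun n ↦ hX (measurableSet_singleton n))
    (pairwise_disjoint_fiber X)
    (integrableOn_iUnion_of_summable_integral_norm hfi hsum)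
  rwa [hcover, Measure.restrict_univ] at this

end MeasureTheory

namespace ProbabilityTheory

variable {Ω : Type*} [MeasurableSpace Ω] {P : Measure Ω}

lemma iIndepFun.indepFun_fun_prod_range_succ {Z : ℕ → Ω → ℝ} (hZ : iIndepFun Z P)
    (hmeas : ∀ h, AEMeasurable (Z h) P) (n : ℕ) :
    IndepFun (fun ω ↦ ∏ h ∈ range n, Z h ω) (Z n) P := by
  simpa only [Finset.prod_fn] using hZ.indepFun_prod_range_succ₀ hmeas n

lemma iIndepFun.integrable_fun_prod_range {Z : ℕ → Ω → ℝ} (hZ : iIndepFun Z P)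
    (hint : ∀ h, Integrable (Z h) P) (n : ℕ) :
    Integrable (fun ω ↦ ∏ h ∈ range n, Z h ω) P := by
  induction n with
  | zero => have := hZ.isProbabilityMeasure; simp
  | succ n ih =>
    simp_rw [prod_range_succ]
    exact (hZ.indepFun_fun_prod_range_succ (fun h ↦ (hint h).aemeasurable) n).integrable_mul
      ih (hint n)

lemma iIndepFun.integral_fun_prod_range {Z : ℕ → Ω → ℝ} (hZ : iIndepFun Z P)
    (hint : ∀ h, Integrable (Z h) P) (n : ℕ) :
    ∫ ω, ∏ h ∈ range n, Z h ω ∂P = ∏ h ∈ range n, ∫ ω, Z h ω ∂P := by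
  induction n with
  | zero => have := hZ.isProbabilityMeasure; simp
  | succ n ih =>
    simp_rw [prod_range_succ, ← ih]
    exact (hZ.indepFun_fun_prod_range_succ (fun h ↦ (hint h).aemeasurable) n)
      |>.integral_fun_mul_eq_mul_integral
        (hZ.integrable_fun_prod_range hint n).aestronglyMeasurable (hint n).aestronglyMeasurable

lemma IndepFun.setIntegral_preimage_eq_mul {β : Type*} [MeasurableSpace β] {X : Ω → β}
    {Z : Ω → ℝ} (hXZ : IndepFun X Z P) (hX : Measurable X) (hZ : AEMeasurable Z P)
    {s : Set β} (hs : MeasurableSet s) :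
    ∫ ω in X ⁻¹' s, Z ω ∂P = P.real (X ⁻¹' s) * ∫ ω, Z ω ∂P :=
  Indep.setIntegral_eq_mul (f := id) hX.comap_le hXZ hZ ⟨s, hs, rfl⟩
    aestronglyMeasurable_id

section RandomProduct

variable {X : Ω → ℕ} {Z : ℕ → Ω → ℝ}

lemma integrableOn_preimage_singleton_prod_range (hX : Measurable X) (hZ : iIndepFun Z P)
    (hint : ∀ h, Integrable (Z h) P) (n : ℕ) :
    IntegrableOn (fun ω ↦ ∏ h ∈ range (X ω), Z h ω) (X ⁻¹' {n}) P := by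
  refine (hZ.integrable_fun_prod_range hint n).integrableOn.congr_fun (fun ω hω ↦ ?_)
    (hX (measurableSet_singleton n))
  rw [Set.mem_preimage, Set.mem_singleton_iff] at hω
  rw [hω]

lemma setIntegral_preimage_singleton_prod_range (hX : Measurable X) (hZ : iIndepFun Z P)
    (hint : ∀ h, Integrable (Z h) P) (hXZ : IndepFun X (fun ω h ↦ Z h ω) P) (n : ℕ) :
    ∫ ω in X ⁻¹' {n}, ∏ h ∈ range (X ω), Z h ω ∂P =
      P.real (X ⁻¹' {n}) * ∏ h ∈ range n, ∫ ω, Z h ω ∂P := by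
  have hsing : MeasurableSet (X ⁻¹' {n}) := hX (measurableSet_singleton n)
  have hXprod : IndepFun X (fun ω ↦ ∏ h ∈ range n, Z h ω) P :=
    hXZ.comp (ψ := fun z : ℕ → ℝ ↦ ∏ h ∈ range n, z h) measurable_id (by fun_prop)
  rw [← hZ.integral_fun_prod_range hint n,
    ← hXprod.setIntegral_preimage_eq_mul hX
      (hZ.integrable_fun_prod_range hint n).aemeasurable (measurableSet_singleton n)]
  refine setIntegral_congr_fun hsing fun ω hω ↦ ?_
  rw [Set.mem_preimage, Set.mem_singleton_iff] at hω
  rw [hω]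

end RandomProduct

lemma hasSum_poissonMeasure_real_singleton_mul_pow (r : ℝ≥0) (x : ℝ) :
    HasSum (fun n ↦ (poissonMeasure r).real {n} * x ^ n) (Real.exp (r * (x - 1))) := by
  have hterm : (fun n ↦ (poissonMeasure r).real {n} * x ^ n) =
      fun n ↦ Real.exp (-r) * ((r * x) ^ n / n !) := by
    ext n
    rw [poissonMeasure_real_singleton, mul_pow]
    ring
  rw [hterm, show (r : ℝ) * (x - 1) = -r + r * x by ring, Real.exp_add, Real.exp_eq_exp_ℝ]
  exact (NormedSpace.expSeries_div_hasSum_exp ((r : ℝ) * x)).mul_left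
    (NormedSpace.exp (-(r : ℝ)))

theorem integral_prod_range_eq_exp_of_map_eq_poissonMeasure {X : Ω → ℕ} {Z : ℕ → Ω → ℝ}
    {r : ℝ≥0} (hX : Measurable X) (hX_law : P.map X = poissonMeasure r)
    (hZ : iIndepFun Z P) (hZ_ident : ∀ h h', IdentDistrib (Z h) (Z h') P P)
    (hZ_int : ∀ h, Integrable (Z h) P) {μ : ℝ} (hZ_mean : ∀ h, ∫ ω, Z h ω ∂P = μ)
    (hXZ : IndepFun X (fun ω h ↦ Z h ω) P) :
    ∫ ω, ∏ h ∈ range (X ω), Z h ω ∂P = Real.exp (r * (μ - 1)) := by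
  have hlaw (n : ℕ) : P.real (X ⁻¹' {n}) = (poissonMeasure r).real {n} := by
    rw [← map_measureReal_apply hX (measurableSet_singleton n), hX_law]
  have hsetIntegral {W : ℕ → Ω → ℝ} (hW : iIndepFun W P) (hW_int : ∀ h, Integrable (W h) P)
      {m : ℝ} (hW_mean : ∀ h, ∫ ω, W h ω ∂P = m) (hXW : IndepFun X (fun ω h ↦ W h ω) P)
      (n : ℕ) :
      ∫ ω in X ⁻¹' {n}, ∏ h ∈ range (X ω), W h ω ∂P = (poissonMeasure r).real {n} * m ^ n := by
    rw [setIntegral_preimage_singleton_prod_range hX hW hW_int hXW, hlaw]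
    simp [hW_mean]
  have hnorm (n : ℕ) : ∫ ω in X ⁻¹' {n}, ‖∏ h ∈ range (X ω), Z h ω‖ ∂P =
      (poissonMeasure r).real {n} * (∫ ω, |Z 0 ω| ∂P) ^ n := by
    simp_rw [Real.norm_eq_abs, Finset.abs_prod]
    exact hsetIntegral (hZ.comp (fun _ x ↦ |x|) fun _ ↦ measurable_abs)
      (fun h ↦ (hZ_int h).abs)
      (fun h ↦ ((hZ_ident h 0).comp measurable_abs).integral_eq)
      (hXZ.comp (ψ := fun z : ℕ → ℝ ↦ fun h ↦ |z h|) measurable_id (by fun_prop)) n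
  have hfibres := hasSum_setIntegral_preimage_singleton hX
    (integrableOn_preimage_singleton_prod_range hX hZ hZ_int)
    (by simpa only [hnorm] using (hasSum_poissonMeasure_real_singleton_mul_pow r _).summable)
  simp only [hsetIntegral hZ hZ_int hZ_mean hXZ] at hfibres
  exact hfibres.unique (hasSum_poissonMeasure_real_singleton_mul_pow r μ)

end ProbabilityTheory

theorem poisson_estimator_unbiased_general
    {Ω : Type*} [MeasurableSpace Ω] (P : Measure Ω) [IsProbabilityMeasure P]
    (X : Ω → ℕ) (hX_meas : Measurable X)
    (hX_law : Measure.map X P = poissonMeasure 1)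
    (Y : ℕ → Ω → ℝ)
    (hY_indep : iIndepFun Y P)
    (hY_ident : ∀ h h', IdentDistrib (Y h) (Y h') P P)
    (hY_int : ∀ h, Integrable (Y h) P)
    (μY : ℝ) (hY_mean : ∀ h, ∫ ω, Y h ω ∂P = μY)
    (hXY_indep : IndepFun X (fun ω h => Y h ω) P)
    (D : ℕ → Ω → ℝ)
    (hD_indep : iIndepFun D P)
    (hD_ident : ∀ h h', IdentDistrib (D h) (D h') P P)
    (hD_int : ∀ h, Integrable (D h) P)
    (d : ℝ) (hD_mean : ∀ h, ∫ ω, D h ω ∂P = d)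
    (hXD_indep : IndepFun X (fun ω h => D h ω) P)
    (a : ℝ) (lam : ℕ) (hlam : 0 < lam) :
    (∫ ω, ∏ h ∈ Finset.range (X ω), Y h ω ∂P = Real.exp (μY - 1)) ∧
    (∫ ω, Real.exp ((a + lam) / lam) * ∏ h ∈ Finset.range (X ω), ((D h ω - a) / lam) ∂P
      = Real.exp (d / lam)) := by
  constructor
  · simpa using integral_prod_range_eq_exp_of_map_eq_poissonMeasure hX_meas hX_law
      hY_indep hY_ident hY_int hY_mean hXY_indep
  have hnormalize : Measurable fun x : ℝ ↦ (x - a) / lam := by fun_prop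
  have hmean (h : ℕ) : ∫ ω, (D h ω - a) / lam ∂P = (d - a) / lam := by
    rw [integral_div, integral_sub (hD_int h) (integrable_const a), hD_mean h, integral_const,
      probReal_univ, one_smul]
  have hprod := integral_prod_range_eq_exp_of_map_eq_poissonMeasure
    (Z := fun h ω ↦ (D h ω - a) / lam) hX_meas hX_law
    (hD_indep.comp _ fun _ ↦ hnormalize) (fun h h' ↦ (hD_ident h h').comp hnormalize)
    (fun h ↦ ((hD_int h).sub (integrable_const a)).div_const _) hmean
    (hXD_indep.comp (ψ := fun z : ℕ → ℝ ↦ fun h ↦ (z h - a) / lam) measurable_id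
      (by fun_prop))
  have hlam' : (lam : ℝ) ≠ 0 := by positivity
  rw [integral_const_mul, hprod, ← Real.exp_add]
  congr 1
  push_cast
  field_simp
  ring

/-- **Unbiasedness of the Poisson estimator.**
Let `X` be a Poisson(1) random variable and `Y 0, Y 1, …` i.i.d. integrable real random
variables with mean `μY`, independent of `X`.  Then `E[∏_{h<X} Y h] = exp (μY − 1)`, the
empty product (`X = 0`) being `1`.  Consequently, if `D 0, D 1, …` are i.i.d. integrable
with mean `d`, independent of `X`, and each factor is `(D h − a)/λ`, then
`ξ = exp((a+λ)/λ) ∏_{h<X} (D h − a)/λ` satisfies `E[ξ] = exp (d/λ)`. -/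
theorem poisson_estimator_unbiased
    {Ω : Type*} [MeasurableSpace Ω] (P : Measure Ω) [IsProbabilityMeasure P]
    (X : Ω → ℕ) (hX_meas : Measurable X)
    (hX_law : Measure.map X P = poissonMeasure 1)
    (Y : ℕ → Ω → ℝ) (hY_meas : ∀ h, Measurable (Y h))
    (hY_indep : iIndepFun Y P)
    (hY_ident : ∀ h h', IdentDistrib (Y h) (Y h') P P)
    (hY_int : ∀ h, Integrable (Y h) P)
    (μY : ℝ) (hY_mean : ∀ h, ∫ ω, Y h ω ∂P = μY)
    (hXY_indep : IndepFun X (fun ω h => Y h ω) P)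
    (D : ℕ → Ω → ℝ) (hD_meas : ∀ h, Measurable (D h))
    (hD_indep : iIndepFun D P)
    (hD_ident : ∀ h h', IdentDistrib (D h) (D h') P P)
    (hD_int : ∀ h, Integrable (D h) P)
    (d : ℝ) (hD_mean : ∀ h, ∫ ω, D h ω ∂P = d)
    (hXD_indep : IndepFun X (fun ω h => D h ω) P)
    (a : ℝ) (lam : ℕ) (hlam : 0 < lam) :
    (∫ ω, ∏ h ∈ Finset.range (X ω), Y h ω ∂P = Real.exp (μY - 1)) ∧
    (∫ ω, Real.exp ((a + lam) / lam) * ∏ h ∈ Finset.range (X ω), ((D h ω - a) / lam) ∂P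
      = Real.exp (d / lam)) :=
  poisson_estimator_unbiased_general P X hX_meas hX_law Y hY_indep hY_ident hY_int μY hY_mean
    hXY_indep D hD_indep hD_ident hD_int d hD_mean hXD_indep a lam hlam
end

section
/- (Unbiasedness of the Block-Poisson estimator.) Fix λ ∈ ℕ⁺, a ∈ ℝ, and real numbers q_1, …, q_n with Q = exp(Σ_{i=1}^n q_i). For l = 1, …, λ let X_l be i.i.d. Poisson(1) random variables and let {D^{(h,l)} : h ≥ 1, 1 ≤ l ≤ λ} be i.i.d. integrable random variables with mean d = Σ_{i=1}^n d_i, all mutually independent. Define ξ_l = exp((a+λ)/λ) ∏_{h=1}^{X_l} (D^{(h,l)} − a)/λ and p̂_B = Q ∏_{l=1}^{λ} ξ_l. Then E[p̂_B] = Q e^{d} = exp( Σ_{i=1}^n (q_i + d_i) ). In particular, if q_i + d_i = ℓ_i are the log-likelihood contributions, p̂_B is an unbiased estimator of the likelihood p(y|θ) = exp(Σ_i ℓ_i). -/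
/-!
Splitting according to the value `k : Fin λ → ℕ` of `(X l)_l`, the product
`∏ l, ∏_{h < X l} (D h l - a)/λ` equals `∑' k, ∏ l, 1{X l = k l} ∏_{h < k l} (D h l - a)/λ`.
Each summand involves only finitely many coordinates of the independent family, so its
expectation is `∏ l, P(X l = k l) m ^ k l` with `m = (d - a)/λ`. The same computation with
absolute values, where every factor has the same mean `E|D - a|/λ` by identical distribution,
shows that the expected absolute values of the summands are summable, so expectation and sum
commute, and the sum factors as `(∑' j, P(X = j) m ^ j) ^ λ = exp (m - 1) ^ λ`, the Poisson
generating function at `m`.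
The factor `exp ((a + λ)/λ) ^ λ` then turns `exp (d - a - λ)` into `exp d`.
-/

open MeasureTheory ProbabilityTheory Finset
open scoped NNReal

/-- The value type of the joint family consisting of the Poisson block sizes
(`ℕ`-valued, indexed by `Fin lam`) and the mini-batch estimates (`ℝ`-valued, indexed by
`ℕ × Fin lam`). -/
def BPType (lam : ℕ) : Fin lam ⊕ (ℕ × Fin lam) → Type
  | .inl _ => ℕ
  | .inr _ => ℝ

instance (lam : ℕ) (i : Fin lam ⊕ (ℕ × Fin lam)) : MeasurableSpace (BPType lam i) := by
  cases i with
  | inl _ => exact inferInstanceAs (MeasurableSpace ℕ)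
  | inr _ => exact inferInstanceAs (MeasurableSpace ℝ)

/-- The joint family of random variables `X l` (block sizes) and `D h l`
(mini-batch estimates), viewed as a single indexed family. -/
def BPFun {Ω : Type*} {lam : ℕ} (X : Fin lam → Ω → ℕ) (D : ℕ → Fin lam → Ω → ℝ) :
    ∀ i : Fin lam ⊕ (ℕ × Fin lam), Ω → BPType lam i
  | .inl l => X l
  | .inr p => D p.1 p.2

section Independence

variable {Ω ι : Type*} [MeasurableSpace Ω] {μ : Measure Ω} {𝕜 : Type*} [RCLike 𝕜] {g : ι → Ω → 𝕜}

theorem ProbabilityTheory.iIndepFun.integrable_finset_prod (hg : iIndepFun g μ)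
    (hint : ∀ i, Integrable (g i) μ) (s : Finset ι) :
    Integrable (fun ω => ∏ i ∈ s, g i ω) μ := by
  classical
  have := hg.isProbabilityMeasure
  induction s using Finset.induction_on with
  | empty => simp
  | insert i s hi ih =>
    have hindep : IndepFun (∏ j ∈ s, g j) (g i) μ :=
      hg.indepFun_finsetProd_of_notMem₀ (fun j => (hint j).aemeasurable) hi
    have hprod : Integrable (∏ j ∈ s, g j) μ := by simpa [Finset.prod_fn] using ih
    refine (hindep.integrable_mul hprod (hint i)).congr (.of_forall fun ω => ?_)
    simp [Finset.prod_insert hi, mul_comm]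

theorem ProbabilityTheory.iIndepFun.integral_finset_prod (hg : iIndepFun g μ)
    (hmeas : ∀ i, AEStronglyMeasurable (g i) μ) (s : Finset ι) :
    ∫ ω, ∏ i ∈ s, g i ω ∂μ = ∏ i ∈ s, ∫ ω, g i ω ∂μ := by
  rw [← Finset.prod_coe_sort s fun i => ∫ ω, g i ω ∂μ,
    ← (hg.precomp Subtype.val_injective).integral_fun_prod_eq_prod_integral fun i : s => hmeas i]
  congr 1 with ω
  exact (Finset.prod_coe_sort s fun i => g i ω).symm

end Independence

section Combinatorics

variable {ι : Type*} [Fintype ι]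

def blockIndices (k : ι → ℕ) : Finset (ι ⊕ ℕ × ι) :=
  Finset.univ.disjSum ((Finset.univ.sigma fun l => Finset.range (k l)).map
    ((Equiv.sigmaEquivProd ι ℕ).trans (Equiv.prodComm ι ℕ)).toEmbedding)

theorem prod_blockIndices {M : Type*} [CommMonoid M] (k : ι → ℕ) (F : ι ⊕ ℕ × ι → M) :
    ∏ i ∈ blockIndices k, F i = ∏ l, (F (.inl l) * ∏ h ∈ Finset.range (k l), F (.inr (h, l))) := by
  rw [blockIndices, Finset.prod_disjSum, Finset.prod_map, Finset.prod_sigma,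
    ← Finset.prod_mul_distrib]
  rfl

theorem prod_prod_range_eq_tsum_ite {R : Type*} [CommSemiring R] [TopologicalSpace R]
    (N : ι → ℕ) (y : ℕ → ι → R) :
    ∏ l, ∏ h ∈ Finset.range (N l), y h l =
      ∑' k : ι → ℕ, ∏ l, ((if N l = k l then 1 else 0) * ∏ h ∈ Finset.range (k l), y h l) := by
  rw [tsum_eq_single N fun k hk => ?_]
  · simp
  obtain ⟨l, hl⟩ := Function.ne_iff.mp hk
  exact Finset.prod_eq_zero (Finset.mem_univ l) (by simp [Ne.symm hl])

end Combinatorics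

section ProductOfSeries

variable {R : Type*} [NormedCommRing R] {v : ℕ → R}

theorem summable_norm_prod_fin (hv : Summable fun j => ‖v j‖) :
    ∀ m : ℕ, Summable fun k : Fin m → ℕ => ‖∏ l, v (k l)‖
  | 0 => (hasSum_fintype _).summable
  | m + 1 => by
    rw [← (Fin.consEquiv fun _ => ℕ).summable_iff]
    convert hv.mul_norm (summable_norm_prod_fin hv m) with p
    simp [Fin.prod_univ_succ, Fin.consEquiv]

theorem tsum_prod_fin_eq_pow [CompleteSpace R] (hv : Summable fun j => ‖v j‖) :
    ∀ m : ℕ, ∑' k : Fin m → ℕ, ∏ l, v (k l) = (∑' j, v j) ^ m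
  | 0 => by simp
  | m + 1 => by
    rw [← (Fin.consEquiv fun _ => ℕ).tsum_eq, pow_succ', ← tsum_prod_fin_eq_pow hv m,
      tsum_mul_tsum_of_summable_norm hv (summable_norm_prod_fin hv m)]
    congr with p
    simp [Fin.prod_univ_succ, Fin.consEquiv]

end ProductOfSeries

section Poisson

theorem integrable_ite_eq {Ω : Type*} [MeasurableSpace Ω] {P : Measure Ω} [IsFiniteMeasure P]
    {X : Ω → ℕ} (hX : AEMeasurable X P) (j : ℕ) :
    Integrable (fun ω => if X ω = j then (1 : ℝ) else 0) P :=
  .of_bound ((measurable_of_countable fun n => if n = j then (1 : ℝ) else 0).comp_aemeasurable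
    hX).aestronglyMeasurable 1 (.of_forall fun ω => by split_ifs <;> simp)

theorem integral_ite_eq_poissonMeasure_real {Ω : Type*} [MeasurableSpace Ω] {P : Measure Ω}
    {X : Ω → ℕ} {r : ℝ≥0} (hX : P.map X = poissonMeasure r) (j : ℕ) :
    ∫ ω, (if X ω = j then (1 : ℝ) else 0) ∂P = (poissonMeasure r).real {j} := by
  have hXm : AEMeasurable X P :=
    .of_map_ne_zero (by rw [hX]; exact IsProbabilityMeasure.ne_zero _)
  rw [← integral_map (f := fun n => if n = j then (1 : ℝ) else 0) hXm
    (measurable_of_countable _).aestronglyMeasurable, hX, ← integral_indicator_one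
    (measurableSet_singleton j)]
  congr with n
  simp [Set.indicator_apply]

theorem hasSum_poissonMeasure_real_mul_pow (r : ℝ≥0) (x : ℝ) :
    HasSum (fun n => (poissonMeasure r).real {n} * x ^ n) (Real.exp (r * (x - 1))) := by
  have hterm : (fun n => (poissonMeasure r).real {n} * x ^ n) =
      fun n => Real.exp (-r) * ((r * x) ^ n / n.factorial) := by
    ext n
    rw [poissonMeasure_real_singleton, mul_pow]
    ring
  rw [hterm, show (r : ℝ) * (x - 1) = -r + r * x by ring, Real.exp_add, Real.exp_eq_exp_ℝ]
  exact (NormedSpace.expSeries_div_hasSum_exp ((r : ℝ) * x)).mul_left _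

theorem summable_norm_poissonMeasure_real_mul_pow (r : ℝ≥0) (x : ℝ) :
    Summable fun n => ‖(poissonMeasure r).real {n} * x ^ n‖ := by
  simpa [abs_mul, abs_pow, abs_of_nonneg measureReal_nonneg] using
    (hasSum_poissonMeasure_real_mul_pow r |x|).summable

end Poisson

section JointFamily

variable {Ω : Type*} {lam : ℕ} {X : Fin lam → Ω → ℕ} {D : ℕ → Fin lam → Ω → ℝ}
  {φ : Fin lam → ℕ → ℝ} {ψ : ℝ → ℝ}

def BPCoordFun (φ : Fin lam → ℕ → ℝ) (ψ : ℝ → ℝ) :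
    ∀ i : Fin lam ⊕ (ℕ × Fin lam), BPType lam i → ℝ
  | .inl l => φ l
  | .inr _ => ψ

theorem measurable_BPCoordFun (hψ : Measurable ψ) :
    ∀ i, Measurable (BPCoordFun φ ψ i)
  | .inl l => measurable_of_countable (φ l)
  | .inr _ => hψ

theorem prod_blockIndices_BPCoordFun (k : Fin lam → ℕ) (ω : Ω) :
    ∏ i ∈ blockIndices k, (BPCoordFun φ ψ i ∘ BPFun X D i) ω =
      ∏ l, (φ l (X l ω) * ∏ h ∈ Finset.range (k l), ψ (D h l ω)) :=
  prod_blockIndices k _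

variable [MeasurableSpace Ω] {P : Measure Ω}

theorem integrable_BPCoordFun_comp (hφ : ∀ l, Integrable (fun ω => φ l (X l ω)) P)
    (hψ : ∀ h l, Integrable (fun ω => ψ (D h l ω)) P) :
    ∀ i, Integrable (BPCoordFun φ ψ i ∘ BPFun X D i) P
  | .inl l => hφ l
  | .inr p => hψ p.1 p.2

theorem integrable_prod_mul_prod_range (hindep : iIndepFun (BPFun X D) P) (hψm : Measurable ψ)
    (hφ : ∀ l, Integrable (fun ω => φ l (X l ω)) P)
    (hψ : ∀ h l, Integrable (fun ω => ψ (D h l ω)) P) (k : Fin lam → ℕ) :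
    Integrable (fun ω => ∏ l, (φ l (X l ω) * ∏ h ∈ Finset.range (k l), ψ (D h l ω))) P := by
  simpa only [prod_blockIndices_BPCoordFun] using
    (hindep.comp _ (measurable_BPCoordFun hψm)).integrable_finset_prod
      (integrable_BPCoordFun_comp hφ hψ) (blockIndices k)

theorem integral_prod_mul_prod_range (hindep : iIndepFun (BPFun X D) P) (hψm : Measurable ψ)
    (hφ : ∀ l, Integrable (fun ω => φ l (X l ω)) P)
    (hψ : ∀ h l, Integrable (fun ω => ψ (D h l ω)) P) {α : Fin lam → ℝ} {β : ℝ}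
    (hα : ∀ l, ∫ ω, φ l (X l ω) ∂P = α l) (hβ : ∀ h l, ∫ ω, ψ (D h l ω) ∂P = β)
    (k : Fin lam → ℕ) :
    ∫ ω, ∏ l, (φ l (X l ω) * ∏ h ∈ Finset.range (k l), ψ (D h l ω)) ∂P =
      ∏ l, (α l * β ^ k l) := by
  simp_rw [← prod_blockIndices_BPCoordFun (φ := φ) (ψ := ψ) k]
  rw [(hindep.comp _ (measurable_BPCoordFun hψm)).integral_finset_prod
    (fun i => (integrable_BPCoordFun_comp hφ hψ i).aestronglyMeasurable), prod_blockIndices]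
  refine Finset.prod_congr rfl fun l _ => congrArg₂ (· * ·) (hα l) ?_
  exact (Finset.prod_congr rfl fun h _ => hβ h l).trans (by simp)

end JointFamily

theorem integral_prod_prod_range_eq_exp {Ω : Type*} [MeasurableSpace Ω] {P : Measure Ω}
    {lam : ℕ} {X : Fin lam → Ω → ℕ} {D : ℕ → Fin lam → Ω → ℝ} {r : ℝ≥0} {ψ : ℝ → ℝ} {m c : ℝ}
    (hindep : iIndepFun (BPFun X D) P) (hX : ∀ l, P.map (X l) = poissonMeasure r)
    (hψm : Measurable ψ) (hψ : ∀ h l, Integrable (fun ω => ψ (D h l ω)) P)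
    (hmean : ∀ h l, ∫ ω, ψ (D h l ω) ∂P = m) (hnorm : ∀ h l, ∫ ω, ‖ψ (D h l ω)‖ ∂P = c) :
    ∫ ω, ∏ l, ∏ h ∈ Finset.range (X l ω), ψ (D h l ω) ∂P = Real.exp (r * (m - 1)) ^ lam := by
  have := hindep.isProbabilityMeasure
  set F : (Fin lam → ℕ) → Ω → ℝ := fun k ω =>
    ∏ l, ((if X l ω = k l then 1 else 0) * ∏ h ∈ Finset.range (k l), ψ (D h l ω))
  have hind : ∀ l j, Integrable (fun ω => if X l ω = j then (1 : ℝ) else 0) P := fun l =>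
    integrable_ite_eq (.of_map_ne_zero (by rw [hX l]; exact IsProbabilityMeasure.ne_zero _))
  have hF_int : ∀ k, Integrable (F k) P := fun k =>
    integrable_prod_mul_prod_range (φ := fun l n => if n = k l then 1 else 0) hindep hψm
      (fun l => hind l (k l)) hψ k
  have hF : ∀ k, ∫ ω, F k ω ∂P = ∏ l, ((poissonMeasure r).real {k l} * m ^ k l) := fun k =>
    integral_prod_mul_prod_range (φ := fun l n => if n = k l then 1 else 0) hindep hψm
      (fun l => hind l (k l)) hψ (fun l => integral_ite_eq_poissonMeasure_real (hX l) (k l))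
      hmean k
  have hF_norm : ∀ k, ∫ ω, ‖F k ω‖ ∂P = ∏ l, ((poissonMeasure r).real {k l} * c ^ k l) := by
    intro k
    have hnorm_F : ∀ ω, ‖F k ω‖ = ∏ l, ((if X l ω = k l then 1 else 0) *
        ∏ h ∈ Finset.range (k l), ‖ψ (D h l ω)‖) := fun ω => by
      simp [F, norm_prod, apply_ite]
    simp_rw [hnorm_F]
    exact integral_prod_mul_prod_range (φ := fun l n => if n = k l then 1 else 0) hindep
      hψm.norm (fun l => hind l (k l)) (fun h l => (hψ h l).norm)
      (fun l => integral_ite_eq_poissonMeasure_real (hX l) (k l)) hnorm k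
  have hsum_norm : Summable fun k => ∫ ω, ‖F k ω‖ ∂P := by
    simp_rw [hF_norm]
    exact (summable_norm_prod_fin (summable_norm_poissonMeasure_real_mul_pow r c) lam).of_norm
  calc ∫ ω, ∏ l, ∏ h ∈ Finset.range (X l ω), ψ (D h l ω) ∂P
      = ∫ ω, ∑' k : Fin lam → ℕ, F k ω ∂P := by
        simp_rw [F, prod_prod_range_eq_tsum_ite fun l => X l _]
    _ = ∑' k : Fin lam → ℕ, ∏ l, ((poissonMeasure r).real {k l} * m ^ k l) := by
        rw [← integral_tsum_of_summable_integral_norm hF_int hsum_norm]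
        simp_rw [hF]
    _ = Real.exp (r * (m - 1)) ^ lam := by
        rw [tsum_prod_fin_eq_pow (summable_norm_poissonMeasure_real_mul_pow r m),
          (hasSum_poissonMeasure_real_mul_pow r m).tsum_eq]

theorem block_poisson_unbiased_general
    {Ω : Type*} [MeasurableSpace Ω] (P : Measure Ω) [IsProbabilityMeasure P]
    (lam : ℕ) (hlam : 0 < lam) (a : ℝ) (n : ℕ) (q di : Fin n → ℝ) (Q d : ℝ)
    (hQ : Q = Real.exp (∑ i, q i)) (hdsum : d = ∑ i, di i)
    (X : Fin lam → Ω → ℕ)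
    (hX_law : ∀ l, Measure.map (X l) P = poissonMeasure 1)
    (D : ℕ → Fin lam → Ω → ℝ)
    (hD_int : ∀ h l, Integrable (D h l) P)
    (hD_ident : ∀ h l h' l', IdentDistrib (D h l) (D h' l') P P)
    (hD_mean : ∀ h l, ∫ ω, D h l ω ∂P = d)
    (h_mutual_indep : iIndepFun (BPFun X D) P) :
    (∫ ω, Q * ∏ l : Fin lam,
        (Real.exp ((a + lam) / lam) *
          ∏ h ∈ Finset.range (X l ω), ((D h l ω - a) / lam)) ∂P
      = Q * Real.exp d) ∧
    Q * Real.exp d = Real.exp (∑ i, (q i + di i)) := by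
  refine ⟨?_, by rw [hQ, hdsum, ← Real.exp_add, ← Finset.sum_add_distrib]⟩
  set ψ : ℝ → ℝ := fun x => (x - a) / lam
  have hψm : Measurable ψ := by fun_prop
  have hψ : ∀ h l, Integrable (fun ω => ψ (D h l ω)) P := fun h l =>
    ((hD_int h l).sub (integrable_const a)).div_const _
  have hmean : ∀ h l, ∫ ω, ψ (D h l ω) ∂P = (d - a) / lam := fun h l => by
    simp [ψ, integral_div, integral_sub (hD_int h l) (integrable_const a), hD_mean]
  have hnorm : ∀ h l, ∫ ω, ‖ψ (D h l ω)‖ ∂P = ∫ ω, ‖ψ (D 0 ⟨0, hlam⟩ ω)‖ ∂P := fun h l =>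
    ((hD_ident h l 0 ⟨0, hlam⟩).comp hψm.norm).integral_eq
  have hcore := integral_prod_prod_range_eq_exp h_mutual_indep hX_law hψm hψ hmean hnorm
  simp_rw [Finset.prod_mul_distrib, Finset.prod_const, Finset.card_univ, Fintype.card_fin]
  rw [integral_const_mul, integral_const_mul, hcore, ← Real.exp_nat_mul, ← Real.exp_nat_mul,
    ← Real.exp_add]
  congr 2
  push_cast
  field_simp
  ring

/-- **Unbiasedness of the Block-Poisson estimator.**
Fix `λ ∈ ℕ⁺`, `a ∈ ℝ` and reals `q 1, …, q n` with `Q = exp (∑ i, q i)`.  Let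
`X 1, …, X λ` be i.i.d. Poisson(1) random variables and let `D (h,l)`, `h ≥ 1`,
`1 ≤ l ≤ λ`, be i.i.d. integrable random variables with mean `d = ∑ i, di i`, all
mutually independent.  With `ξ l = exp((a+λ)/λ) ∏_{h<X l} (D h l − a)/λ` and
`p̂_B = Q ∏ l, ξ l` one has `E[p̂_B] = Q e^d = exp (∑ i, (q i + di i))`; in particular,
if `q i + di i = ℓ i` are the log-likelihood contributions, `p̂_B` is an unbiased
estimator of the likelihood `exp (∑ i, ℓ i)`. -/
theorem block_poisson_unbiased
    {Ω : Type*} [MeasurableSpace Ω] (P : Measure Ω) [IsProbabilityMeasure P]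
    (lam : ℕ) (hlam : 0 < lam) (a : ℝ) (n : ℕ) (q di : Fin n → ℝ) (Q d : ℝ)
    (hQ : Q = Real.exp (∑ i, q i)) (hdsum : d = ∑ i, di i)
    (X : Fin lam → Ω → ℕ) (hX_meas : ∀ l, Measurable (X l))
    (hX_law : ∀ l, Measure.map (X l) P = poissonMeasure 1)
    (D : ℕ → Fin lam → Ω → ℝ) (hD_meas : ∀ h l, Measurable (D h l))
    (hD_int : ∀ h l, Integrable (D h l) P)
    (hD_ident : ∀ h l h' l', IdentDistrib (D h l) (D h' l') P P)
    (hD_mean : ∀ h l, ∫ ω, D h l ω ∂P = d)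
    (h_mutual_indep : iIndepFun (BPFun X D) P) :
    (∫ ω, Q * ∏ l : Fin lam,
        (Real.exp ((a + lam) / lam) *
          ∏ h ∈ Finset.range (X l ω), ((D h l ω - a) / lam)) ∂P
      = Q * Real.exp d) ∧
    Q * Real.exp d = Real.exp (∑ i, (q i + di i)) :=
  block_poisson_unbiased_general P lam hlam a n q di Q d hQ hdsum X hX_law D hD_int hD_ident hD_mean
    h_mutual_indep
end

section
/- (Signed PMMH identity.) Let p(θ) be a probability density on Θ and p(u) a probability density on U. Let p̂(θ, u) be a measurable real-valued (possibly negative) function with ∫_U p̂(θ, u) p(u) du = p(y | θ) for every θ, where p(y|θ) ≥ 0, and suppose both ∫∫ |p̂(θ,u)| p(u) p(θ) du dθ < ∞ and p(y) = ∫ p(y|θ) p(θ) dθ > 0. Let s(θ,u) = sign(p̂(θ,u)) and let π̄(θ, u) = |p̂(θ, u)| p(u) p(θ) / p̃(y) with p̃(y) = ∫∫ |p̂| p(u) p(θ). Then for any measurable ψ with ∫ |ψ(θ)| p(y|θ) p(θ) dθ < ∞: E_π[ψ] = E_{π̄}[ψ s] / E_{π̄}[s], where π(θ) = p(y|θ)p(θ)/p(y)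 is the posterior; in particular E_{π̄}[s] = p(y)/p̃(y) ≠ 0. -/
open MeasureTheory

lemma real_sign_mul_abs (x : ℝ) : Real.sign x * |x| = x := by
  rcases lt_trichotomy x 0 with h | h | h
  · rw [Real.sign_of_neg h, abs_of_neg h]; ring
  · simp [h]
  · rw [Real.sign_of_pos h, abs_of_pos h]; ring

/-- **The signed pseudo-marginal (PMMH) identity.**
Let `pθ` be a probability density on `Θ` (w.r.t. `μ`) and `pu` a probability density on
`U` (w.r.t. `ν`).  Let `phat θ u` be a measurable, possibly negative, likelihood
estimator with `∫ u, phat θ u * pu u ∂ν = like θ` for every `θ`, where `like ≥ 0` is the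
likelihood; suppose the absolute augmented target has finite total mass
`p̃ = ∫ θ, (∫ u, |phat θ u| * pu u ∂ν) * pθ θ ∂μ < ∞` (integrability) and
`py = ∫ θ, like θ * pθ θ ∂μ > 0`.  Let `s = sign (phat θ u)` and let
`π̄ (θ, u) = |phat θ u| * pu u * pθ θ / p̃`.  Then for any measurable `ψ` with
`ψ · like · pθ` integrable, `E_π[ψ] = E_π̄[ψ s] / E_π̄[s]` where
`π (θ) = like θ * pθ θ / py` is the posterior; in particular `E_π̄[s] = py / p̃ ≠ 0`. -/
theorem signed_pseudo_marginal_identity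
    {Θ U : Type*} [MeasurableSpace Θ] [MeasurableSpace U]
    (μ : Measure Θ) (ν : Measure U) [SigmaFinite μ] [SigmaFinite ν]
    (pθ : Θ → ℝ) (pu : U → ℝ) (phat : Θ → U → ℝ) (like : Θ → ℝ) (ψ : Θ → ℝ)
    (py ptilde Eψs Es : ℝ)
    (hpθ_meas : Measurable pθ) (hpθ_nonneg : ∀ θ, 0 ≤ pθ θ)
    (hpθ_prob : ∫ θ, pθ θ ∂μ = 1)
    (hpu_meas : Measurable pu) (hpu_nonneg : ∀ u, 0 ≤ pu u)
    (hpu_prob : ∫ u, pu u ∂ν = 1)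
    (hphat_meas : Measurable (Function.uncurry phat))
    (hlike_nonneg : ∀ θ, 0 ≤ like θ)
    (hψ_meas : Measurable ψ)
    (hunbiased_int : ∀ θ, Integrable (fun u => phat θ u * pu u) ν)
    (hunbiased : ∀ θ, ∫ u, phat θ u * pu u ∂ν = like θ)
    (hpy : py = ∫ θ, like θ * pθ θ ∂μ)
    (hpy_int : Integrable (fun θ => like θ * pθ θ) μ)
    (hpy_pos : 0 < py)
    (hptilde : ptilde = ∫ θ, (∫ u, |phat θ u| * pu u ∂ν) * pθ θ ∂μ)
    (hptilde_int : Integrable (fun θ => (∫ u, |phat θ u| * pu u ∂ν) * pθ θ) μ)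
    (hψ_int : Integrable (fun θ => ψ θ * like θ * pθ θ) μ)
    (hEψs : Eψs =
      (∫ θ, (∫ u, ψ θ * Real.sign (phat θ u) * |phat θ u| * pu u ∂ν) * pθ θ ∂μ) / ptilde)
    (hEs : Es =
      (∫ θ, (∫ u, Real.sign (phat θ u) * |phat θ u| * pu u ∂ν) * pθ θ ∂μ) / ptilde) :
    Eψs / Es = (∫ θ, ψ θ * like θ * pθ θ ∂μ) / py ∧
    Es = py / ptilde ∧ Es ≠ 0 := by
  have hinner : ∀ θ, (∫ u, Real.sign (phat θ u) * |phat θ u| * pu u ∂ν) = like θ := by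
    intro θ
    rw [← hunbiased θ]
    congr 1; ext u; rw [mul_assoc, ← mul_assoc, real_sign_mul_abs]
  have hinnerψ : ∀ θ, (∫ u, ψ θ * Real.sign (phat θ u) * |phat θ u| * pu u ∂ν)
      = ψ θ * like θ := by
    intro θ
    rw [← hunbiased θ, ← integral_const_mul]
    congr 1; ext u
    rw [show ψ θ * Real.sign (phat θ u) * |phat θ u| * pu u
        = ψ θ * (Real.sign (phat θ u) * |phat θ u|) * pu u by ring, real_sign_mul_abs,
      mul_assoc]
  have hEs' : Es = py / ptilde := by
    rw [hEs, hpy]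
    congr 1
    exact integral_congr_ae (Filter.Eventually.of_forall fun θ => by dsimp only; rw [hinner θ])
  have hEψs' : Eψs = (∫ θ, ψ θ * like θ * pθ θ ∂μ) / ptilde := by
    rw [hEψs]
    congr 1
    exact integral_congr_ae (Filter.Eventually.of_forall fun θ => by dsimp only; rw [hinnerψ θ])
  have hpt_pos : 0 < ptilde := by
    have hmono : py ≤ ptilde := by
      rw [hpy, hptilde]
      refine integral_mono hpy_int hptilde_int fun θ => ?_
      have h1 : like θ ≤ ∫ u, |phat θ u| * pu u ∂ν := by
        rw [← hunbiased θ]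
        calc ∫ u, phat θ u * pu u ∂ν ≤ |∫ u, phat θ u * pu u ∂ν| := le_abs_self _
          _ ≤ ∫ u, |phat θ u| * |pu u| ∂ν := by
              simpa [Real.norm_eq_abs, abs_mul] using
                norm_integral_le_integral_norm (fun u => phat θ u * pu u) (μ := ν)
          _ = ∫ u, |phat θ u| * pu u ∂ν := by
              congr 1; ext u; rw [abs_of_nonneg (hpu_nonneg u)]
      exact mul_le_mul_of_nonneg_right h1 (hpθ_nonneg θ)
    linarith
  refine ⟨?_, hEs', ?_⟩
  · rw [hEs', hEψs']
    field_simp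
  · rw [hEs']
    exact div_ne_zero (ne_of_gt hpy_pos) (ne_of_gt hpt_pos)
end
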